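/- arXiv:2003.09748 — 2 statements merged into one kernel-verified Lean document; each statement's English description precedes it below -/
import Mathlib

section
/- Let 0 ≤ k ≤ m and let n_k denote the number of k-normal elements of E over F. If n_k > 0, i.e. if at least one k-normal element exists in E, then n_k ≥ Φ_q(X^m − 1)/q^k; equivalently, n_k · q^k ≥ card((F[X]/(X^m − 1))ˣ). -/
/-!
Let `R = F[X]/(X^m - 1)` act on `E` with `X` acting as the Frobenius `x ↦ x^q`; then the
`F`-span of the conjugates of `α` is the cyclic submodule `R ∙ α`. Units of `R` do not change
`R ∙ α`, so the `Rˣ`-orbit of a `k`-normal `α` consists of `k`-normal elements. By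
orbit–stabilizer, `|Rˣ| = |orbit| · |stabilizer|`, and `u ↦ u - 1` embeds the stabilizer into
the annihilator of `α`, an `F`-subspace of `R` of dimension `m - (m - k) = k`.
-/

open Polynomial Module Submodule MulAction
open LinearMap (ker toSpanSingleton)

section UnitsOrbit

variable {R M : Type*} [Ring R] [AddCommGroup M] [Module R M]

theorem card_stabilizer_units_le_card_ker_toSpanSingleton [Finite R] (x : M) :
    Nat.card (stabilizer Rˣ x) ≤ Nat.card (ker (toSpanSingleton R M x)) := by
  refine Nat.card_le_card_of_injective (fun u => ⟨(u : Rˣ) - 1, ?_⟩) fun u v h => ?_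
  · have hu : (u : Rˣ) • x = x := u.2
    simp [sub_smul, ← Units.smul_def, hu]
  · have h' : ((u : Rˣ) : R) - 1 = ((v : Rˣ) : R) - 1 := congrArg Subtype.val h
    exact Subtype.ext (Units.ext (sub_left_injective h'))

theorem card_units_le_card_orbit_mul_card_ker_toSpanSingleton [Finite R] (x : M) :
    Nat.card Rˣ ≤ Nat.card (orbit Rˣ x) * Nat.card (ker (toSpanSingleton R M x)) := by
  rw [← (stabilizer Rˣ x).card_mul_index, index_stabilizer, mul_comm]
  exact Nat.mul_le_mul_left _ (card_stabilizer_units_le_card_ker_toSpanSingleton x)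

theorem natCard_ker_toSpanSingleton_eq_pow {F : Type*} [Field F] [Finite F] [Algebra F R]
    [Module F M] [IsScalarTower F R M] [FiniteDimensional F R] (x : M) :
    Nat.card (ker (toSpanSingleton R M x)) =
      Nat.card F ^ (finrank F R - finrank F (span R {x})) := by
  have h := LinearMap.finrank_range_add_finrank_ker ((toSpanSingleton R M x).restrictScalars F)
  rw [LinearMap.range_restrictScalars, LinearMap.ker_restrictScalars,
    ← LinearMap.span_singleton_eq_range] at h
  change finrank F (span R {x}) + finrank F (ker (toSpanSingleton R M x)) = _ at h
  rw [natCard_eq_pow_finrank (K := F)]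
  congr 1
  omega

end UnitsOrbit

theorem AdjoinRoot.span_root_pow_eq_top {F : Type*} [Field F] {f : F[X]} (hf : f ≠ 0) :
    span F (Set.range fun i : Fin f.natDegree => root f ^ (i : ℕ)) = ⊤ := by
  have := (powerBasis hf).basis.span_eq
  rwa [PowerBasis.coe_basis, powerBasis_gen] at this

section Frobenius

variable (F E : Type*) [Field F] [Fintype F] [Field E] [Finite E] [Algebra F E]

local notation "𝓡" => AdjoinRoot (X ^ finrank F E - 1 : F[X])

noncomputable def frobeniusRep : 𝓡 →ₐ[F] Module.End F E :=
  Ideal.Quotient.liftₐ _ (aeval (FiniteField.frobeniusAlgHom F E).toLinearMap) fun _ hg =>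
    aeval_eq_zero_of_dvd_aeval_eq_zero (Ideal.mem_span_singleton.mp hg)
      (FiniteField.minpoly_frobeniusAlgHom F E ▸ minpoly.aeval F _)

theorem frobeniusRep_root :
    frobeniusRep F E (AdjoinRoot.root _) = (FiniteField.frobeniusAlgHom F E).toLinearMap :=
  aeval_X _

noncomputable instance : Module 𝓡 E :=
  Module.compHom E (frobeniusRep F E).toRingHom

instance : IsScalarTower F 𝓡 E :=
  ⟨fun c r x => show frobeniusRep F E (c • r) x = c • frobeniusRep F E r x by simp⟩

instance : Module.Finite F 𝓡 :=
  Monic.finite_adjoinRoot (leadingCoeff_X_pow_sub_one finrank_pos)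

variable {F E}

theorem root_pow_smul_eq_pow_card_pow (i : ℕ) (x : E) :
    AdjoinRoot.root (X ^ finrank F E - 1 : F[X]) ^ i • x = x ^ Fintype.card F ^ i := by
  change frobeniusRep F E _ x = _
  rw [map_pow, frobeniusRep_root, Module.End.pow_apply]
  exact congrFun (pow_iterate _ i) x

theorem restrictScalars_span_singleton_eq_span_conjugates (x : E) :
    (span 𝓡 {x}).restrictScalars F =
      span F (Set.range fun i : Fin (finrank F E) => x ^ Fintype.card F ^ (i : ℕ)) := by
  have hspan := AdjoinRoot.span_root_pow_eq_top
    (X_pow_sub_C_ne_zero (finrank_pos (R := F) (M := E)) (1 : F))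
  rw [natDegree_X_pow_sub_C, C_1] at hspan
  rw [← span_smul_of_span_eq_top hspan, Set.smul_singleton, ← Set.range_comp]
  simp only [Function.comp_def, root_pow_smul_eq_pow_card_pow]

theorem finrank_span_conjugates_units_smul (u : 𝓡ˣ) (x : E) :
    finrank F (span F (Set.range fun i : Fin (finrank F E) =>
        (u • x) ^ Fintype.card F ^ (i : ℕ))) =
      finrank F (span F (Set.range fun i : Fin (finrank F E) =>
        x ^ Fintype.card F ^ (i : ℕ))) := by
  rw [← restrictScalars_span_singleton_eq_span_conjugates,
    ← restrictScalars_span_singleton_eq_span_conjugates, span_singleton_group_smul_eq]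

end Frobenius

/-- Let `E/F` be a degree-`m` extension of finite fields with `card F = q`,
and `0 ≤ k ≤ m`. Let `n_k` be the number of `k`-normal elements of `E` over `F`.
If `n_k > 0`, then `n_k ≥ Φ_q(X^m − 1)/q^k`, i.e.
`n_k · q^k ≥ card ((F[X]/(X^m − 1))ˣ)`. -/
theorem card_kNormal_mul_q_pow_ge
    {F E : Type} [Field F] [Fintype F] [Field E] [Fintype E] [Algebra F E]
    (q m k : ℕ) (hF : Fintype.card F = q) (hm : Module.finrank F E = m) (hk : k ≤ m)
    (hpos : 0 < Nat.card {α : E // Module.finrank F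
        ↥(Submodule.span F (Set.range fun i : Fin m => α ^ q ^ (i : ℕ))) = m - k}) :
    Nat.card {α : E // Module.finrank F
        ↥(Submodule.span F (Set.range fun i : Fin m => α ^ q ^ (i : ℕ))) = m - k} * q ^ k
      ≥ Nat.card ((Polynomial F ⧸ Ideal.span {(Polynomial.X : Polynomial F) ^ m - 1})ˣ) := by
  subst hF hm
  obtain ⟨⟨α, hα⟩, -⟩ := Nat.card_pos_iff.mp hpos
  let R := AdjoinRoot (X ^ finrank F E - 1 : F[X])
  have : Finite R := Module.finite_of_finite F
  have hR : finrank F R = finrank F E :=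
    finrank_quotient_span_eq_natDegree.trans (natDegree_X_pow_sub_C (n := finrank F E))
  have hspan : finrank F (span R {α}) = finrank F E - k := by
    rw [← hα, ← restrictScalars_span_singleton_eq_span_conjugates]
    rfl
  have horbit : Nat.card (orbit Rˣ α) ≤ Nat.card {α : E // finrank F (span F (Set.range
      fun i : Fin (finrank F E) => α ^ Fintype.card F ^ (i : ℕ))) = finrank F E - k} :=
    Nat.card_mono (Set.toFinite _) fun _ ⟨u, hu⟩ =>
      hu ▸ (finrank_span_conjugates_units_smul u α).trans hα
  calc Nat.card ((F[X] ⧸ Ideal.span {(X : F[X]) ^ finrank F E - 1})ˣ)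
      = Nat.card Rˣ := rfl
    _ ≤ Nat.card (orbit Rˣ α) * Nat.card (ker (toSpanSingleton R E α)) :=
      card_units_le_card_orbit_mul_card_ker_toSpanSingleton α
    _ = Nat.card (orbit Rˣ α) * Fintype.card F ^ k := by
      rw [natCard_ker_toSpanSingleton_eq_pow (F := F), hR, hspan, Nat.sub_sub_self hk,
        Nat.card_eq_fintype_card (α := F)]
    _ ≤ _ := Nat.mul_le_mul_right _ horbit
end

section
/- Let 0 ≤ k ≤ m and let α ∈ E be k-normal over F. Then the number of polynomials f ∈ F[X] of degree less than m such that the residue class of f is a unit in F[X]/(X^m − 1) and f·α = α (where f·α = Σ_i f_i α^{q^i} for f = Σ_i f_i X^i) is at most q^k. -/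
/-!
Sending a polynomial of degree `< m` to its coefficient vector embeds the polynomials with
`f·α = α` into the fibre over `α` of the linear map `c ↦ Σ cᵢ α^{qⁱ}` on `F^m`. The image of
this map is the span of the conjugates of `α`, of dimension `m - k`, so its kernel has dimension
`k`, and every nonempty fibre is a coset of the kernel, of size `q^k`.
-/

open Polynomial Module Submodule

theorem LinearMap.card_fiber_le_card_ker {R M N : Type*} [Ring R] [AddCommGroup M]
    [AddCommGroup N] [Module R M] [Module R N] (L : M →ₗ[R] N) (y : N) :
    Nat.card {x // L x = y} ≤ Nat.card (LinearMap.ker L) := by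
  rcases isEmpty_or_nonempty {x // L x = y} with h | ⟨x, rfl⟩
  · simp
  · exact (Nat.card_congr (L.toAddMonoidHom.fiberEquivKer x)).le

theorem Fintype.natCard_ker_linearCombination {K V ι : Type*} [Field K] [Finite K]
    [AddCommGroup V] [Module K V] [Fintype ι] (v : ι → V) :
    Nat.card (LinearMap.ker (Fintype.linearCombination K v)) =
      Nat.card K ^ (Fintype.card ι - finrank K (span K (Set.range v))) := by
  have h := (Fintype.linearCombination K v).finrank_range_add_finrank_ker
  rw [Fintype.range_linearCombination, finrank_fintype_fun_eq_card] at h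
  rw [natCard_eq_pow_finrank (K := K), ← h, Nat.add_sub_cancel_left]

theorem Polynomial.sum_smul_eq_linearCombination_degreeLTEquiv {R M : Type*} [CommRing R]
    [AddCommMonoid M] [Module R M] {n : ℕ} {p : R[X]} (hp : p ∈ degreeLT R n) (w : ℕ → M) :
    p.sum (fun i a => a • w i) =
      Fintype.linearCombination R (fun i : Fin n => w i) (degreeLTEquiv R n ⟨p, hp⟩) :=
  (sum_fin (fun i a => a • w i) (fun _ => zero_smul R _) (mem_degreeLT.1 hp)).symm

theorem card_stabilizer_le_q_pow_general
    {F E : Type} [Field F] [Fintype F] [Field E] [Algebra F E]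
    (q m k : ℕ) (hF : Fintype.card F = q) (hk : k ≤ m)
    (α : E)
    (hα : Module.finrank F
        ↥(Submodule.span F (Set.range fun i : Fin m => α ^ q ^ (i : ℕ))) = m - k) :
    Nat.card {f : Polynomial F //
        f.degree < (m : ℕ) ∧
        IsUnit (Ideal.Quotient.mk (Ideal.span {(Polynomial.X : Polynomial F) ^ m - 1}) f) ∧
        (f.sum fun i a => a • α ^ q ^ i) = α}
      ≤ q ^ k := by
  set L := Fintype.linearCombination F fun i : Fin m => α ^ q ^ (i : ℕ)
  calc _ ≤ Nat.card {c // L c = α} := by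
        refine Nat.card_le_card_of_injective
          (fun f => ⟨degreeLTEquiv F m ⟨f.1, mem_degreeLT.2 f.2.1⟩, ?_⟩) fun f g h => ?_
        · exact (sum_smul_eq_linearCombination_degreeLTEquiv _ (α ^ q ^ ·)).symm.trans f.2.2.2
        · exact Subtype.ext (Subtype.mk.inj ((degreeLTEquiv F m).injective (Subtype.ext_iff.1 h)))
    _ ≤ Nat.card (LinearMap.ker L) := L.card_fiber_le_card_ker α
    _ = q ^ k := by
      rw [Fintype.natCard_ker_linearCombination, hα, Nat.card_eq_fintype_card, hF,
        Fintype.card_fin, Nat.sub_sub_self hk]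

/-- Let `E/F` be a degree-`m` extension of finite fields with `card F = q`,
`0 ≤ k ≤ m`, and let `α ∈ E` be `k`-normal over `F`. Then the number of polynomials
`f ∈ F[X]` of degree less than `m` whose residue class is a unit in `F[X]/(X^m − 1)`
and which satisfy `f·α = α` (where `f·α = Σ_i f_i α^{q^i}`) is at most `q^k`. -/
theorem card_stabilizer_le_q_pow
    {F E : Type} [Field F] [Fintype F] [Field E] [Fintype E] [Algebra F E]
    (q m k : ℕ) (hF : Fintype.card F = q) (hm : Module.finrank F E = m) (hk : k ≤ m)
    (α : E)
    (hα : Module.finrank F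
        ↥(Submodule.span F (Set.range fun i : Fin m => α ^ q ^ (i : ℕ))) = m - k) :
    Nat.card {f : Polynomial F //
        f.degree < (m : ℕ) ∧
        IsUnit (Ideal.Quotient.mk (Ideal.span {(Polynomial.X : Polynomial F) ^ m - 1}) f) ∧
        (f.sum fun i a => a • α ^ q ^ i) = α}
      ≤ q ^ k :=
  card_stabilizer_le_q_pow_general q m k hF hk α hα
end
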